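/- Let t, t' ∈ B_n be distinct bracketings of size n, and let G be a digraph whose graph algebra A(G) satisfies the bracketing identity t ≈ t'. Then G has no pleasant path of length H(t,t'), where H(t,t') = min(h(G(t)), h(G(t'))). -/

import Mathlib

namespace AssocSpec

/-- Bracketings of products `x₁ x₂ ⋯ xₙ` represented as binary trees whose
leaves, read from left to right, are the variables `x₁, …, xₙ`. -/
inductive BTree : Type
  | leaf : BTree
  | node : BTree → BTree → BTree

namespace BTree

/-- The size of a bracketing: its number of variables (leaves). -/
def size : BTree → ℕ
  | leaf => 1
  | node l r => l.size + r.size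

/-- Evaluate a bracketing in a magma `(A, op)`, the leaves taking the values
`f k, f (k+1), …` from left to right. -/
def evalFrom {A : Type*} (op : A → A → A) : BTree → (ℕ → A) → ℕ → A
  | leaf, f, k => f k
  | node l r, f, k => op (evalFrom op l f k) (evalFrom op r f (k + l.size))

/-- The term operation induced by a bracketing `t` on a magma `(A, op)`;
the `i`-th variable (0-indexed) takes the value `f i`. -/
def termOp {A : Type*} (op : A → A → A) (t : BTree) (f : ℕ → A) : A :=
  evalFrom op t f 0

/-- The depth sequence of the DFS tree `G(t)` of a bracketing `t`: the `i`-th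
entry is the depth of the `i`-th variable (0-indexed) in `G(t)`. -/
def depths : BTree → List ℕ
  | leaf => [0]
  | node l r => l.depths ++ r.depths.map (· + 1)

/-- The depth of the `i`-th variable (0-indexed) in the DFS tree `G(t)`. -/
def depth (t : BTree) (i : ℕ) : ℕ := t.depths.getD i 0

/-- The height of the DFS tree `G(t)`: the maximum depth of a variable. -/
def height (t : BTree) : ℕ := t.depths.foldr max 0

/-- The edges of the DFS tree `G(t)`, the variables being indexed from the
given offset: `(p, c)` is an edge iff `x_p` is the parent of `x_c`. -/
def edgesFrom : BTree → ℕ → List (ℕ × ℕ)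
  | leaf, _ => []
  | node l r, k => (k, k + l.size) :: (l.edgesFrom k ++ r.edgesFrom (k + l.size))

/-- The edges of the DFS tree `G(t)` (variables indexed from `0`). -/
def edges (t : BTree) : List (ℕ × ℕ) := t.edgesFrom 0

end BTree

open Classical in
/-- The operation of the graph algebra of the digraph with vertex set `V` and
edge relation `E`; `none` plays the role of `∞`. -/
noncomputable def gaOp {V : Type*} (E : V → V → Prop) :
    Option V → Option V → Option V
  | some x, some y => if E x y then some x else none
  | _, _ => none

/-- The magma `(A, op)` satisfies the bracketing identity `t ≈ t'`. -/
def Satisfies {A : Type*} (op : A → A → A) (t t' : BTree) : Prop :=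
  ∀ f : ℕ → A, BTree.termOp op t f = BTree.termOp op t' f

/-- The `n`-th member `s_n` of the associative spectrum of the magma `(A, op)`:
the number of distinct term operations induced by bracketings of size `n`. -/
noncomputable def spectrum {A : Type*} (op : A → A → A) (n : ℕ) : ℕ :=
  Set.ncard {g : (ℕ → A) → A | ∃ t : BTree, t.size = n ∧ g = BTree.termOp op t}

/-- Reachability (by a walk) in the digraph with edge relation `E`. -/
def Reach {V : Type*} (E : V → V → Prop) : V → V → Prop :=
  Relation.ReflTransGen E

/-- `u` and `v` lie in the same strongly connected component. -/
def SameSCC {V : Type*} (E : V → V → Prop) (u v : V) : Prop :=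
  Reach E u v ∧ Reach E v u

/-- The strongly connected component of `v`, as a set of vertices. -/
def scc {V : Type*} (E : V → V → Prop) (v : V) : Set V :=
  {u | SameSCC E u v}

/-- `v` lies in a nontrivial strongly connected component (one carrying at
least one edge), i.e. `v` lies on a closed walk of positive length. -/
def InNontrivialSCC {V : Type*} (E : V → V → Prop) (v : V) : Prop :=
  ∃ u, E v u ∧ Reach E u v

/-- The induced subgraph on the set `K` (with the edge relation `E`) is an
`m`-whirl: `K` is partitioned into blocks `B 0, …, B (m-1)` so that edges go
exactly from each block to the cyclically next one. -/
def IsWhirlOn {V : Type*} (E : V → V → Prop) (K : Set V) (m : ℕ) : Prop :=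
  ∃ B : ZMod m → Set V,
    (∀ i, (B i).Nonempty) ∧
    (∀ i, B i ⊆ K) ∧
    (∀ x ∈ K, ∃! i, x ∈ B i) ∧
    (∀ x ∈ K, ∀ y ∈ K, (E x y ↔ ∃ i, x ∈ B i ∧ y ∈ B (i + 1)))

/-- `p 0 → p 1 → ⋯ → p len` is a path (a walk with pairwise distinct
vertices) in the digraph with edge relation `E`. -/
def IsPath {V : Type*} (E : V → V → Prop) (len : ℕ) (p : ℕ → V) : Prop :=
  (∀ i < len, E (p i) (p (i + 1))) ∧
  (∀ i ≤ len, ∀ j ≤ len, p i = p j → i = j)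

/-- The walk `p 0 → ⋯ → p len` is pleasant: all its vertices belong to
trivial strongly connected components. -/
def IsPleasant {V : Type*} (E : V → V → Prop) (len : ℕ) (p : ℕ → V) : Prop :=
  ∀ i ≤ len, ¬ InNontrivialSCC E (p i)

/-- The connected component `K` (of an undirected graph) is complete
bipartite: it splits into two nonempty parts with edges exactly between
vertices of different parts. -/
def IsCompleteBipartiteOn {V : Type*} (E : V → V → Prop) (K : Set V) : Prop :=
  ∃ B1 B2 : Set V, B1.Nonempty ∧ B2.Nonempty ∧ B1 ∪ B2 = K ∧ B1 ∩ B2 = ∅ ∧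
    ∀ x ∈ K, ∀ y ∈ K, (E x y ↔ (x ∈ B1 ∧ y ∈ B2) ∨ (x ∈ B2 ∧ y ∈ B1))

/-- A DFS tree of size `n`: a rooted directed tree on the vertices
`x₁, …, xₙ` (here `Fin n`, the root being `0`), given by its parent function,
such that the parent of every non-root vertex precedes it and the vertex set
of the induced subtree rooted at any vertex `i` is an interval `[i, i']`.
(The parent of the root is, by convention, the root itself.) -/
structure DFSTree (n : ℕ) where
  parent : Fin n → Fin n
  parent_lt : ∀ i : Fin n, 0 < (i : ℕ) → (parent i : ℕ) < (i : ℕ)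
  parent_root : ∀ i : Fin n, (i : ℕ) = 0 → parent i = i
  interval : ∀ i j k : Fin n, i ≤ j → j ≤ k →
    (∃ a : ℕ, parent^[a] k = i) → (∃ a : ℕ, parent^[a] j = i)

/-- The depth of the vertex `i` in a DFS tree: the length of the path from
the root to `i`. -/
noncomputable def DFSTree.depth {n : ℕ} (T : DFSTree n) (i : Fin n) : ℕ :=
  sInf {k : ℕ | (T.parent^[k] i : ℕ) = 0}

/-- The height of a DFS tree: the maximum depth of a vertex. -/
noncomputable def DFSTree.height {n : ℕ} (T : DFSTree n) : ℕ :=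
  Finset.univ.sup fun i => T.depth i

/-- The vertex `i` is a leaf (childless vertex) of the DFS tree `T`. -/
def DFSTree.IsLeaf {n : ℕ} (T : DFSTree n) (i : Fin n) : Prop :=
  ∀ j : Fin n, T.parent j = i → j = i

/-- `t_h(n)`: the number of DFS trees of size `n` of height at most `h`. -/
noncomputable def tcount (h n : ℕ) : ℕ :=
  Nat.card {T : DFSTree n // T.height ≤ h}

/-- `d` is a zag sequence: `d₁ = 0`, `d₂ = 1`, and
`1 ≤ d_{i+1} ≤ d_i + 1` for all `i` (1-indexed as in the paper;
here `d : Fin n → ℕ` is 0-indexed). -/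
def IsZag {n : ℕ} (d : Fin n → ℕ) : Prop :=
  (∀ h : 0 < n, d ⟨0, h⟩ = 0) ∧
  (∀ h : 1 < n, d ⟨1, h⟩ = 1) ∧
  (∀ i : ℕ, ∀ h : i + 1 < n,
    1 ≤ d ⟨i + 1, h⟩ ∧ d ⟨i + 1, h⟩ ≤ d ⟨i, Nat.lt_of_succ_lt h⟩ + 1)

/-- `M(t,t')`: the largest `m` such that the depth sequences of the DFS trees
of the bracketings `t` and `t'` are congruent modulo `m`. -/
noncomputable def Mval (t t' : BTree) : ℕ :=
  sSup {m : ℕ | ∀ i < t.size, t.depth i ≡ t'.depth i [MOD m]}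

end AssocSpec

/-!
Let `h(t) ≤ h(t')` and let `p₀ → p₁ → ⋯ → p_{h(t)}` be a pleasant path. Sending the variable
`x_i` to `p_{d(i)}`, where `d(i)` is its depth in `G(t)`, makes `t` evaluate to `p₀ ≠ ∞`, so `t'`
does too, i.e. every edge of `G(t')` is sent to an edge of `G`. As the path is pleasant, edges
of `G` between its vertices only go forward, so `d` increases strictly along the edges of `G(t')`
and hence dominates the depths in `G(t')`. Then `h(t') ≤ h(t)`, the argument runs symmetrically,
and the two depth sequences coincide; but a bracketing is determined by its depth sequence.
-/

namespace AssocSpec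

namespace BTree

theorem size_pos (t : BTree) : 0 < t.size := by
  induction t with
  | leaf => simp [size]
  | node l r ihl ihr => simp only [size]; omega

theorem length_depths (t : BTree) : t.depths.length = t.size := by
  induction t with
  | leaf => simp [size, depths]
  | node l r ihl ihr => simp [size, depths, ihl, ihr]

theorem depth_node_left (l r : BTree) {i : ℕ} (hi : i < l.size) :
    (node l r).depth i = l.depth i := by
  rw [depth, depths, List.getD_append _ _ _ _ (by rwa [length_depths])]
  rfl

theorem depth_node_right (l r : BTree) {j : ℕ} (hj : j < r.size) :
    (node l r).depth (l.size + j) = r.depth j + 1 := by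
  have hj' : j < r.depths.length := by rwa [length_depths]
  rw [depth, depths, List.getD_append_right _ _ _ _ (by rw [length_depths]; omega),
    length_depths, Nat.add_sub_cancel_left, List.getD_eq_getElem _ _ (by simpa using hj'),
    List.getElem_map, depth, List.getD_eq_getElem _ _ hj']

theorem depth_zero (t : BTree) : t.depth 0 = 0 := by
  induction t with
  | leaf => rfl
  | node l r ihl _ => rw [depth_node_left l r (size_pos l), ihl]

theorem depth_pos {t : BTree} {i : ℕ} (hi₀ : 0 < i) (hi : i < t.size) : 0 < t.depth i := by
  induction t generalizing i with
  | leaf => simp only [size] at hi; omega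
  | node l r ihl _ =>
    rcases lt_or_ge i l.size with hl | hl
    · rw [depth_node_left l r hl]; exact ihl hi₀ hl
    · obtain ⟨j, rfl⟩ := Nat.exists_eq_add_of_le hl
      rw [depth_node_right l r (by simp only [size] at hi; omega)]
      omega

theorem depth_eq_getElem {t : BTree} {i : ℕ} (hi : i < t.depths.length) :
    t.depth i = t.depths[i] :=
  List.getD_eq_getElem _ _ hi

theorem depth_le_height {t : BTree} {i : ℕ} (hi : i < t.size) : t.depth i ≤ t.height := by
  rw [← length_depths] at hi
  exact List.le_max_of_le' 0 (List.getElem_mem hi) (depth_eq_getElem hi).le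

theorem height_le_of_forall_depth_le {t : BTree} {c : ℕ} (h : ∀ i < t.size, t.depth i ≤ c) :
    t.height ≤ c := by
  refine List.max_le_of_forall_le _ _ fun x hx => ?_
  obtain ⟨i, hi, rfl⟩ := List.mem_iff_getElem.1 hx
  rw [← depth_eq_getElem]
  exact h i (by rwa [length_depths] at hi)

theorem size_eq_of_depths_eq {t t' : BTree} (h : t.depths = t'.depths) : t.size = t'.size := by
  rw [← length_depths, h, length_depths]

/-- The variable `x_{l'.size}` of `node l' r'` has depth `1`, whereas in `node l r` every variable
beyond `x_{l.size}` has depth at least `2`. -/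
theorem not_size_lt_of_depths_node_eq {l r l' r' : BTree}
    (h : (node l r).depths = (node l' r').depths) : ¬ l.size < l'.size := by
  intro hlt
  have hsz : l.size + r.size = l'.size + r'.size := size_eq_of_depths_eq h
  obtain ⟨j, hj⟩ := Nat.exists_eq_add_of_lt hlt
  have hdepth : (node l r).depth l'.size = (node l' r').depth l'.size := by rw [depth, depth, h]
  have h₁ := depth_node_right l' r' (j := 0) (size_pos r')
  have h₂ := depth_node_right l r (j := j + 1) (by have := size_pos r'; omega)
  have h₃ := depth_pos (t := r) (i := j + 1) (by omega) (by have := size_pos r'; omega)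
  rw [Nat.add_zero, depth_zero] at h₁
  rw [← Nat.add_assoc, ← hj] at h₂
  omega

theorem depths_injective : Function.Injective depths := by
  intro t t' h
  induction t generalizing t' with
  | leaf =>
    cases t' with
    | leaf => rfl
    | node l' r' =>
      have := size_eq_of_depths_eq h
      have := size_pos l'; have := size_pos r'
      simp only [size] at *; omega
  | node l r ihl ihr =>
    cases t' with
    | leaf =>
      have := size_eq_of_depths_eq h
      have := size_pos l; have := size_pos r
      simp only [size] at *; omega
    | node l' r' =>
      have hl : l.size = l'.size :=
        le_antisymm (not_lt.1 (not_size_lt_of_depths_node_eq h.symm))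
          (not_lt.1 (not_size_lt_of_depths_node_eq h))
      obtain ⟨h₁, h₂⟩ := List.append_inj h (by rw [length_depths, length_depths, hl])
      rw [ihl h₁, ihr (List.map_injective_iff.2 (add_left_injective 1) h₂)]

theorem eq_of_depth_eq {t t' : BTree} (hsz : t.size = t'.size)
    (h : ∀ i < t.size, t.depth i = t'.depth i) : t = t' := by
  refine depths_injective (List.ext_getElem (by rw [length_depths, length_depths, hsz]) ?_)
  intro i hi hi'
  rw [← depth_eq_getElem, ← depth_eq_getElem]
  exact h i (by rwa [length_depths] at hi)

theorem exists_of_mem_edgesFrom {t : BTree} {k a b : ℕ} (h : (a, b) ∈ t.edgesFrom k) :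
    ∃ i j, a = k + i ∧ b = k + j ∧ i < t.size ∧ j < t.size ∧ t.depth j = t.depth i + 1 := by
  induction t generalizing k with
  | leaf => simp [edgesFrom] at h
  | node l r ihl ihr =>
    have hl := size_pos l
    have hr := size_pos r
    simp only [edgesFrom, List.mem_cons, List.mem_append, Prod.mk.injEq] at h
    rcases h with ⟨rfl, rfl⟩ | h | h
    · refine ⟨0, l.size, rfl, rfl, by simp only [size]; omega, by simp only [size]; omega, ?_⟩
      simpa [depth_zero] using depth_node_right l r hr
    · obtain ⟨i, j, rfl, rfl, hi, hj, hd⟩ := ihl h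
      refine ⟨i, j, rfl, rfl, by simp only [size]; omega, by simp only [size]; omega, ?_⟩
      rwa [depth_node_left l r hi, depth_node_left l r hj]
    · obtain ⟨i, j, rfl, rfl, hi, hj, hd⟩ := ihr h
      refine ⟨l.size + i, l.size + j, by omega, by omega, by simp only [size]; omega,
        by simp only [size]; omega, ?_⟩
      rw [depth_node_right l r hi, depth_node_right l r hj, hd]

theorem add_depth_le_of_lt_of_mem_edgesFrom {t : BTree} {g : ℕ → ℕ} {k : ℕ}
    (hg : ∀ e ∈ t.edgesFrom k, g e.1 < g e.2) {i : ℕ} (hi : i < t.size) :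
    g k + t.depth i ≤ g (k + i) := by
  induction t generalizing k i with
  | leaf =>
    obtain rfl : i = 0 := by simpa [size] using hi
    simp [depth, depths]
  | node l r ihl ihr =>
    have hroot : g k < g (k + l.size) := hg _ List.mem_cons_self
    rcases lt_or_ge i l.size with hl | hl
    · rw [depth_node_left l r hl]
      exact ihl (fun e he => hg e (by simp [edgesFrom, he])) hl
    · obtain ⟨j, rfl⟩ := Nat.exists_eq_add_of_le hl
      have hj : j < r.size := by simp only [size] at hi; omega
      have := ihr (k := k + l.size) (fun e he => hg e (by simp [edgesFrom, he])) hj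
      rw [Nat.add_assoc] at this
      rw [depth_node_right l r hj]
      omega

end BTree

open BTree

theorem Satisfies.symm {A : Type*} {op : A → A → A} {t t' : BTree} (h : Satisfies op t t') :
    Satisfies op t' t :=
  fun f => (h f).symm

open Classical in
theorem evalFrom_gaOp_some {V : Type*} (E : V → V → Prop) (t : BTree) (g : ℕ → V) (k : ℕ) :
    evalFrom (gaOp E) t (fun i => some (g i)) k =
      if ∀ e ∈ t.edgesFrom k, E (g e.1) (g e.2) then some (g k) else none := by
  induction t generalizing k with
  | leaf => simp [evalFrom, edgesFrom]
  | node l r ihl ihr =>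
    simp only [evalFrom, ihl, ihr, edgesFrom, List.forall_mem_cons, List.mem_append, or_imp,
      forall_and]
    split_ifs <;> simp_all [gaOp]

section Pleasant

variable {V : Type*} {E : V → V → Prop} {L : ℕ} {p : ℕ → V}

theorem reach_of_walk (hwalk : ∀ i < L, E (p i) (p (i + 1))) {d e : ℕ} (hde : d ≤ e)
    (he : e ≤ L) : Reach E (p d) (p e) := by
  induction e, hde using Nat.le_induction with
  | base => exact Relation.ReflTransGen.refl
  | succ n _ ih => exact (ih (by omega)).tail (hwalk n (by omega))

theorem IsPleasant.lt_of_adj (hpl : IsPleasant E L p) (hwalk : ∀ i < L, E (p i) (p (i + 1)))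
    {d e : ℕ} (hd : d ≤ L) (hE : E (p d) (p e)) : d < e := by
  by_contra! hed
  exact hpl d hd ⟨p e, hE, reach_of_walk hwalk hed hd⟩

theorem depth_le_of_satisfies_of_isPleasant {t t' : BTree} (hsz : t.size = t'.size)
    (hsat : Satisfies (gaOp E) t t') (hL : t.height ≤ L)
    (hwalk : ∀ i < L, E (p i) (p (i + 1))) (hpl : IsPleasant E L p) {i : ℕ}
    (hi : i < t'.size) : t'.depth i ≤ t.depth i := by
  have hdepth : ∀ {j}, j < t.size → t.depth j ≤ L := fun hj => (depth_le_height hj).trans hL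
  have ht : termOp (gaOp E) t (fun j => some (p (t.depth j))) = some (p 0) := by
    rw [termOp, evalFrom_gaOp_some, if_pos, depth_zero]
    rintro ⟨a, b⟩ hab
    obtain ⟨i, j, rfl, rfl, -, hj, hij⟩ := exists_of_mem_edgesFrom hab
    simp only [Nat.zero_add, hij]
    exact hwalk _ (by have := hdepth hj; omega)
  have hedges : ∀ e ∈ t'.edgesFrom 0, E (p (t.depth e.1)) (p (t.depth e.2)) := by
    by_contra hne
    rw [hsat, termOp, evalFrom_gaOp_some, if_neg hne] at ht
    cases ht
  have hlt : ∀ e ∈ t'.edgesFrom 0, t.depth e.1 < t.depth e.2 := by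
    rintro ⟨a, b⟩ hab
    obtain ⟨i, j, rfl, rfl, hi, -, -⟩ := exists_of_mem_edgesFrom hab
    simp only [Nat.zero_add] at hab ⊢
    exact hpl.lt_of_adj hwalk (hdepth (hsz ▸ hi)) (hedges _ hab)
  simpa [depth_zero] using add_depth_le_of_lt_of_mem_edgesFrom hlt hi

theorem eq_of_satisfies_of_isPleasant {t t' : BTree} (hsz : t.size = t'.size)
    (hsat : Satisfies (gaOp E) t t') (hL : t.height ≤ L)
    (hwalk : ∀ i < L, E (p i) (p (i + 1))) (hpl : IsPleasant E L p) : t = t' := by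
  have hle : ∀ i < t'.size, t'.depth i ≤ t.depth i := fun i hi =>
    depth_le_of_satisfies_of_isPleasant hsz hsat hL hwalk hpl hi
  have hheight : t'.height ≤ t.height := height_le_of_forall_depth_le fun i hi =>
    (hle i hi).trans (depth_le_height (hsz ▸ hi))
  have hge : ∀ i < t.size, t.depth i ≤ t'.depth i := fun i hi =>
    depth_le_of_satisfies_of_isPleasant hsz.symm hsat.symm (hheight.trans hL) hwalk hpl hi
  exact eq_of_depth_eq hsz fun i hi => le_antisymm (hge i hi) (hle i (hsz ▸ hi))

end Pleasant

end AssocSpec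

open AssocSpec in
theorem stmt17_general {V : Type*} (E : V → V → Prop)
    (t t' : BTree) (hsz : t.size = t'.size) (hne : t ≠ t')
    (hsat : Satisfies (gaOp E) t t') :
    ¬ ∃ p : ℕ → V, IsPath E (min t.height t'.height) p ∧
      IsPleasant E (min t.height t'.height) p := by
  rintro ⟨p, ⟨hwalk, -⟩, hpl⟩
  rcases le_total t.height t'.height with hh | hh
  · rw [min_eq_left hh] at hwalk hpl
    exact hne (eq_of_satisfies_of_isPleasant hsz hsat le_rfl hwalk hpl)
  · rw [min_eq_right hh] at hwalk hpl
    exact hne (eq_of_satisfies_of_isPleasant hsz.symm hsat.symm le_rfl hwalk hpl).symm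

open AssocSpec in
/-- If the graph algebra of a digraph `G` satisfies a
nontrivial bracketing identity `t ≈ t'`, then `G` has no pleasant path of
length `H(t,t') = min (h(G(t)), h(G(t')))`. -/
theorem stmt17 {V : Type*} [Nonempty V] (E : V → V → Prop)
    (t t' : BTree) (hsz : t.size = t'.size) (hne : t ≠ t')
    (hsat : Satisfies (gaOp E) t t') :
    ¬ ∃ p : ℕ → V, IsPath E (min t.height t'.height) p ∧
      IsPleasant E (min t.height t'.height) p :=
  stmt17_general E t t' hsz hne hsat
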